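/- arXiv:0904.1690 — 4 statements merged into one kernel-verified Lean document; each statement's English description precedes it below -/
import Mathlib

section
/- Let ℓ ≥ 4 and 2 ≤ p ≤ ℓ−2 be integers with ℓ−1−p ≥ 2 and p ≥ 5 (or ℓ−1−p ≥ 3 and p ≥ 3). Define F(x) as the quartic −8(ℓ−p−1)²(2ℓ−p−1)x⁴ + 8(ℓ−1)(4ℓ−3p−1)(ℓ−p−1)x³ − 2(12ℓ³ − 11pℓ² − 25ℓ² − 2p²ℓ + 20pℓ + 14ℓ + 2p³ − 2p² − 6p − 2)x² + 4(ℓ−1)(2ℓ² − 2ℓ − p² + p)x + (1−ℓ)ℓ(ℓ+p−1), and let ζ = (1/2)(1/2 + (ℓ+p−1)/(2(ℓ−p−1))). Then F is negative at 1/2 and at (ℓ+p−1)/(2(ℓ−p−1)) and positive at ζ, and hence by the intermediate value theorem F has at least two distinct roots in the open interval (1/2, (ℓ+p−1)/(2(ℓ−p−1))). -/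
set_option maxHeartbeats 1000000 in
/-- Under the stated hypotheses, the quartic F is negative at 1/2 and at
(ℓ+p−1)/(2(ℓ−p−1)), positive at the midpoint ζ, and hence has at least two distinct
roots in the open interval (1/2, (ℓ+p−1)/(2(ℓ−p−1))). -/
theorem stmt_7 (ℓ p : ℤ) (hℓ : 4 ≤ ℓ) (hp : 2 ≤ p) (hpℓ : p ≤ ℓ - 2)
    (hcase : (2 ≤ ℓ - 1 - p ∧ 5 ≤ p) ∨ (3 ≤ ℓ - 1 - p ∧ 3 ≤ p)) :
    let L : ℝ := (ℓ : ℝ)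
    let P : ℝ := (p : ℝ)
    let F : ℝ → ℝ := fun x =>
      -8 * (L - P - 1) ^ 2 * (2 * L - P - 1) * x ^ 4
      + 8 * (L - 1) * (4 * L - 3 * P - 1) * (L - P - 1) * x ^ 3
      - 2 * (12 * L ^ 3 - 11 * P * L ^ 2 - 25 * L ^ 2 - 2 * P ^ 2 * L + 20 * P * L
          + 14 * L + 2 * P ^ 3 - 2 * P ^ 2 - 6 * P - 2) * x ^ 2
      + 4 * (L - 1) * (2 * L ^ 2 - 2 * L - P ^ 2 + P) * x
      + (1 - L) * L * (L + P - 1)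
    let b : ℝ := (L + P - 1) / (2 * (L - P - 1))
    let ζ : ℝ := (1 / 2) * (1 / 2 + b)
    F (1 / 2) < 0 ∧ F b < 0 ∧ 0 < F ζ ∧
      ∃ x y : ℝ, 1 / 2 < x ∧ x < y ∧ y < b ∧ F x = 0 ∧ F y = 0 := by
  intro L P F b ζ
  have hL : (4 : ℝ) ≤ L := show (4:ℝ) ≤ (ℓ:ℝ) by exact_mod_cast hℓ
  have hP : (2 : ℝ) ≤ P := show (2:ℝ) ≤ (p:ℝ) by exact_mod_cast hp
  have hd : (2 : ℝ) ≤ L - P - 1 := by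
    rcases hcase with ⟨h, _⟩ | ⟨h, _⟩
    · have : (2 : ℝ) ≤ ((ℓ - 1 - p : ℤ) : ℝ) := by exact_mod_cast h
      push_cast at this; linarith
    · have : (3 : ℝ) ≤ ((ℓ - 1 - p : ℤ) : ℝ) := by exact_mod_cast h
      push_cast at this; linarith
  have hdpos : (0 : ℝ) < L - P - 1 := by linarith
  have hdne : (L - P - 1) ≠ 0 := ne_of_gt hdpos
  -- closed forms
  have hF12 : F (1 / 2) = -(P - 1) ^ 3 / 2 := by
    show
      -8 * (L - P - 1) ^ 2 * (2 * L - P - 1) * ((1:ℝ)/2) ^ 4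
      + 8 * (L - 1) * (4 * L - 3 * P - 1) * (L - P - 1) * ((1:ℝ)/2) ^ 3
      - 2 * (12 * L ^ 3 - 11 * P * L ^ 2 - 25 * L ^ 2 - 2 * P ^ 2 * L + 20 * P * L
          + 14 * L + 2 * P ^ 3 - 2 * P ^ 2 - 6 * P - 2) * ((1:ℝ)/2) ^ 2
      + 4 * (L - 1) * (2 * L ^ 2 - 2 * L - P ^ 2 + P) * ((1:ℝ)/2)
      + (1 - L) * L * (L + P - 1)
      = -(P - 1) ^ 3 / 2
    ring
  have hFb : F b = -((P - 1) ^ 3 * (L + P - 1) ^ 2) / (2 * (L - P - 1) ^ 2) := by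
    show
      -8 * (L - P - 1) ^ 2 * (2 * L - P - 1) * ((L + P - 1) / (2 * (L - P - 1))) ^ 4
      + 8 * (L - 1) * (4 * L - 3 * P - 1) * (L - P - 1) * ((L + P - 1) / (2 * (L - P - 1))) ^ 3
      - 2 * (12 * L ^ 3 - 11 * P * L ^ 2 - 25 * L ^ 2 - 2 * P ^ 2 * L + 20 * P * L
          + 14 * L + 2 * P ^ 3 - 2 * P ^ 2 - 6 * P - 2) * ((L + P - 1) / (2 * (L - P - 1))) ^ 2
      + 4 * (L - 1) * (2 * L ^ 2 - 2 * L - P ^ 2 + P) * ((L + P - 1) / (2 * (L - P - 1)))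
      + (1 - L) * L * (L + P - 1)
      = -((P - 1) ^ 3 * (L + P - 1) ^ 2) / (2 * (L - P - 1) ^ 2)
    field_simp
    ring
  have hQ : (0 : ℝ) < (L - 1 - P) * (2 * P - 1) * (P - 1) - P * (3 * P - 1) := by
    rcases hcase with ⟨h, h5⟩ | ⟨h, h3⟩
    · have h' : (2 : ℝ) ≤ L - 1 - P := by
        have : (2 : ℝ) ≤ ((ℓ - 1 - p : ℤ) : ℝ) := by exact_mod_cast h
        push_cast at this; linarith
      have h5' : (5 : ℝ) ≤ P := show (5:ℝ) ≤ (p:ℝ) by exact_mod_cast h5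
      nlinarith [sq_nonneg (P - 5), mul_nonneg (sub_nonneg.2 h') (sq_nonneg (P - 1))]
    · have h' : (3 : ℝ) ≤ L - 1 - P := by
        have : (3 : ℝ) ≤ ((ℓ - 1 - p : ℤ) : ℝ) := by exact_mod_cast h
        push_cast at this; linarith
      have h3' : (3 : ℝ) ≤ P := show (3:ℝ) ≤ (p:ℝ) by exact_mod_cast h3
      nlinarith [sq_nonneg (P - 3), mul_nonneg (sub_nonneg.2 h') (sq_nonneg (P - 1))]
  have hFζ : F ζ = (L - 1) * ((L - 1 - P) * (2 * P - 1) * (P - 1) - P * (3 * P - 1))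
      / (2 * (L - P - 1) ^ 2) := by
    have hz : ζ = (L - 1) / (2 * (L - P - 1)) := by
      show (1 / 2 : ℝ) * (1 / 2 + (L + P - 1) / (2 * (L - P - 1))) = _
      field_simp
      ring
    rw [hz]
    show
      -8 * (L - P - 1) ^ 2 * (2 * L - P - 1) * ((L - 1) / (2 * (L - P - 1))) ^ 4
      + 8 * (L - 1) * (4 * L - 3 * P - 1) * (L - P - 1) * ((L - 1) / (2 * (L - P - 1))) ^ 3
      - 2 * (12 * L ^ 3 - 11 * P * L ^ 2 - 25 * L ^ 2 - 2 * P ^ 2 * L + 20 * P * L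
          + 14 * L + 2 * P ^ 3 - 2 * P ^ 2 - 6 * P - 2) * ((L - 1) / (2 * (L - P - 1))) ^ 2
      + 4 * (L - 1) * (2 * L ^ 2 - 2 * L - P ^ 2 + P) * ((L - 1) / (2 * (L - P - 1)))
      + (1 - L) * L * (L + P - 1)
      = _
    field_simp
    ring
  have h1 : F (1 / 2) < 0 := by
    rw [hF12]
    have : (0 : ℝ) < (P - 1) ^ 3 := by nlinarith
    linarith
  have h2 : F b < 0 := by
    rw [hFb]
    apply div_neg_of_neg_of_pos
    · have h1 : (0 : ℝ) < (P - 1) ^ 3 := by nlinarith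
      have h2 : (0 : ℝ) < (L + P - 1) ^ 2 := by nlinarith
      nlinarith
    · positivity
  have h3 : 0 < F ζ := by
    rw [hFζ]
    apply div_pos
    · have : (0 : ℝ) < L - 1 := by linarith
      exact mul_pos this hQ
    · positivity
  have hbhalf : (1 / 2 : ℝ) < b := by
    show (1 / 2 : ℝ) < (L + P - 1) / (2 * (L - P - 1))
    rw [lt_div_iff₀ (by linarith : (0:ℝ) < 2 * (L - P - 1))]
    linarith
  have hζ1 : (1 / 2 : ℝ) < ζ := by
    show (1 / 2 : ℝ) < (1 / 2) * (1 / 2 + b); linarith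
  have hζ2 : ζ < b := by
    show (1 / 2 : ℝ) * (1 / 2 + b) < b; linarith
  have hcont : Continuous F := by
    show Continuous fun x : ℝ => _
    fun_prop
  have ivt1 := intermediate_value_Ioo (le_of_lt hζ1) hcont.continuousOn
  have ivt2 := intermediate_value_Ioo' (le_of_lt hζ2) hcont.continuousOn
  have hx : (0 : ℝ) ∈ Set.Ioo (F (1/2)) (F ζ) := ⟨h1, h3⟩
  have hy : (0 : ℝ) ∈ Set.Ioo (F b) (F ζ) := ⟨h2, h3⟩
  obtain ⟨x, hxmem, hxval⟩ := ivt1 hx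
  obtain ⟨y, hymem, hyval⟩ := ivt2 hy
  exact ⟨h1, h2, h3, x, y, hxmem.1, lt_trans hxmem.2 hymem.1, hymem.2, hxval, hyval⟩
end

section
/- For every integer p ≥ 2 with p ≤ 6, the two solutions (x₁, x₄) of the system {4(p−1)x₁² − 4(2p−1)x₁ + (p−1)x₄ + 3p−1 = 0, 4(p−1)x₁² + (3p−1)x₄² − 4(2p−1)x₁x₄ + (p−1)x₄ = 0} given by x₄ = (7p³ − p² − 3p + 1 ± 2(2p−1)√(2p(−p³+7p²−5p+1)))/((p−1)(3p−1)²) and x₁ = √(p·x₄/(2(p−1))) are real and positive. -/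
/-!
With `N = 7p³ - p² - 3p + 1`, `B = (p-1)(3p-1)²` and `D = 2p(-p³ + 7p² - 5p + 1)` one has
`N² - B² = 4(2p-1)² D`, so both values of `x₄` are the roots `(N ± √(N² - B²)) / B` of
`B x² - 2N x + B = 0`. Both are positive because `√(N² - B²) < N`; they are real because
`D > 0` for `2 ≤ p ≤ 6`. Since `N + B = 4p(2p-1)²`, the same quadratic reads
`p x₄ / (2(p-1)) = ((3p-1)(x₄+1) / (4(2p-1)))²`, which identifies `x₁` as a rational function
of `x₄`. Substituting `x₁` and `x₁²` turns both Einstein equations into identities that are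
linear in `x₄`.
-/

lemma quadratic_eq_zero_of_sq_eq {K : Type*} [Field K] {a b y : K} (ha : a ≠ 0)
    (hy : y ^ 2 = b ^ 2 - a ^ 2) :
    a * ((b + y) / a) ^ 2 - 2 * b * ((b + y) / a) + a = 0 := by
  field_simp
  linear_combination hy

lemma div_pos_of_sq_eq {a b y : ℝ} (ha : 0 < a) (hb : 0 < b) (hy : y ^ 2 = b ^ 2 - a ^ 2) :
    0 < (b + y) / a := by
  have : |y| < b := abs_lt_of_sq_lt_sq (by nlinarith) hb.le
  exact div_pos (by linarith [neg_abs_le y]) ha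

lemma einstein_eqs_of_relations {R : Type*} [CommRing R] {P x₁ x₄ : R}
    (hsq : 4 * (P - 1) * x₁ ^ 2 = 2 * P * x₄)
    (hlin : 4 * (2 * P - 1) * x₁ = (3 * P - 1) * (x₄ + 1)) :
    4 * (P - 1) * x₁ ^ 2 - 4 * (2 * P - 1) * x₁ + (P - 1) * x₄ + 3 * P - 1 = 0 ∧
      4 * (P - 1) * x₁ ^ 2 + (3 * P - 1) * x₄ ^ 2 - 4 * (2 * P - 1) * x₁ * x₄
        + (P - 1) * x₄ = 0 :=
  ⟨by linear_combination hsq - hlin, by linear_combination hsq - x₄ * hlin⟩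

section

variable {P : ℝ}

lemma discr_pos (h2 : 2 ≤ P) (h6 : P ≤ 6) : 0 < 2 * P * (-P ^ 3 + 7 * P ^ 2 - 5 * P + 1) := by
  -- `-P³ + 7P² - 5P + 1 = (6 - P)(P² - P - 1) + 7`
  nlinarith [mul_nonneg (by linarith : (0:ℝ) ≤ 6 - P) (by nlinarith : (0:ℝ) ≤ P ^ 2 - P - 1)]

lemma sq_pm_sqrt_discr {ε : ℝ} (hε : ε ^ 2 = 1) (h2 : 2 ≤ P) (h6 : P ≤ 6) :
    (ε * (2 * (2 * P - 1) * √(2 * P * (-P ^ 3 + 7 * P ^ 2 - 5 * P + 1)))) ^ 2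
      = (7 * P ^ 3 - P ^ 2 - 3 * P + 1) ^ 2 - ((P - 1) * (3 * P - 1) ^ 2) ^ 2 := by
  have hs := Real.sq_sqrt (discr_pos h2 h6).le
  linear_combination (2 * (2 * P - 1) * √(2 * P * (-P ^ 3 + 7 * P ^ 2 - 5 * P + 1))) ^ 2 * hε
    + 4 * (2 * P - 1) ^ 2 * hs

lemma sqrt_eq_of_quadratic_eq_zero {x : ℝ} (h1 : 1 < P) (hx : 0 < x)
    (hq : (P - 1) * (3 * P - 1) ^ 2 * x ^ 2 - 2 * (7 * P ^ 3 - P ^ 2 - 3 * P + 1) * x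
      + (P - 1) * (3 * P - 1) ^ 2 = 0) :
    √(P * x / (2 * (P - 1))) = (3 * P - 1) * (x + 1) / (4 * (2 * P - 1)) := by
  have h2P : 0 < 2 * P - 1 := by linarith
  rw [Real.sqrt_eq_iff_mul_self_eq_of_pos (div_pos (by nlinarith) (by linarith)),
    div_mul_div_comm, div_eq_div_iff (by positivity) (by linarith)]
  linear_combination 2 * hq

end

/-- For every integer 2 ≤ p ≤ 6, the two solutions (x₁, x₄) of the Einstein system
for SO(4p)/U(p)×U(p), given by
x₄ = (7p³−p²−3p+1 ± 2(2p−1)√(2p(−p³+7p²−5p+1)))/((p−1)(3p−1)²) and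
x₁ = √(p·x₄/(2(p−1))), are real and positive. -/
theorem stmt_10 (p : ℤ) (h2 : 2 ≤ p) (h6 : p ≤ 6) (ε : ℝ) (hε : ε = 1 ∨ ε = -1) :
    let P : ℝ := (p : ℝ)
    let x₄ : ℝ := (7 * P ^ 3 - P ^ 2 - 3 * P + 1
        + ε * (2 * (2 * P - 1) * Real.sqrt (2 * P * (-P ^ 3 + 7 * P ^ 2 - 5 * P + 1))))
        / ((P - 1) * (3 * P - 1) ^ 2)
    let x₁ : ℝ := Real.sqrt (P * x₄ / (2 * (P - 1)))
    0 < x₄ ∧ 0 < x₁ ∧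
      4 * (P - 1) * x₁ ^ 2 - 4 * (2 * P - 1) * x₁ + (P - 1) * x₄ + 3 * P - 1 = 0 ∧
      4 * (P - 1) * x₁ ^ 2 + (3 * P - 1) * x₄ ^ 2 - 4 * (2 * P - 1) * x₁ * x₄
        + (P - 1) * x₄ = 0 := by
  intro P x₄ x₁
  have hP2 : (2 : ℝ) ≤ P := by simp only [P]; exact_mod_cast h2
  have hP6 : P ≤ 6 := by simp only [P]; exact_mod_cast h6
  have hP1 : P - 1 ≠ 0 := by linarith
  have h2P1 : 2 * P - 1 ≠ 0 := by linarith
  have hε2 : ε ^ 2 = 1 := by rcases hε with rfl | rfl <;> norm_num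
  have hy := sq_pm_sqrt_discr hε2 hP2 hP6
  have hB : 0 < (P - 1) * (3 * P - 1) ^ 2 := by nlinarith
  have hx₄ : 0 < x₄ := div_pos_of_sq_eq hB (by nlinarith) hy
  have hx₁ : x₁ = (3 * P - 1) * (x₄ + 1) / (4 * (2 * P - 1)) :=
    sqrt_eq_of_quadratic_eq_zero (by linarith) hx₄ (quadratic_eq_zero_of_sq_eq hB.ne' hy)
  have hx₁_pos : 0 < x₁ := hx₁ ▸ div_pos (by nlinarith) (by linarith)
  have hsq : 4 * (P - 1) * x₁ ^ 2 = 2 * P * x₄ := by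
    rw [Real.sq_sqrt (div_pos (by nlinarith) (by linarith)).le]
    field_simp
    norm_num
  have hlin : 4 * (2 * P - 1) * x₁ = (3 * P - 1) * (x₄ + 1) := by
    rw [hx₁]
    field_simp
  exact ⟨hx₄, hx₁_pos, einstein_eqs_of_relations hsq hlin⟩
end

section
/- For each G in the list {F₄, E₇, E₈(i), E₈(ii)} with isotropy dimensions (d₁,d₂,d₃,d₄) equal to (12,18,4,6), (48,36,16,6), (96,60,32,6), (84,70,28,14) respectively, the assignment x = (1,2,3,4) satisfies the three equations r₁ = r₂, r₂ = r₃, r₃ = r₄, where r₁ = 1/(2x₁) − (c₁₁²/(2d₁))·x₂/x₁² + (c₁₂³/(2d₁))(x₁/(x₂x₃) − x₂/(x₁x₃) − x₃/(x₁x₂)) + (c₁₃⁴/(2d₁))(x₁/(x₃x₄) − x₃/(x₁x₄) − x₄/(x₁x₃)), r₂ = 1/(2x₂) − (c₂₂⁴/(2d₂))·x₄/x₂² + (c₁₁²/(4d₂))(x₂/x₁² − 2/x₂) + (c₁₂³/(2d₂))(x₂/(x₁x₃) − x₁/(x₂x₃) − x₃/(x₁x₂)), r₃ = 1/(2x₃)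 + (c₁₂³/(2d₃))(x₃/(x₁x₂) − x₂/(x₁x₃) − x₁/(x₂x₃)) + (c₁₃⁴/(2d₃))(x₃/(x₁x₄) − x₁/(x₃x₄) − x₄/(x₁x₃)), r₄ = 1/(2x₄) + (c₂₂⁴/(4d₄))(x₄/x₂² − 2/x₄) + (c₁₃⁴/(2d₄))(x₄/(x₁x₃) − x₁/(x₃x₄) − x₃/(x₁x₄)), with structure constants (c₂₂⁴, c₁₁², c₁₂³, c₁₃⁴) equal to (2, 2, 1, 2/3), (2, 8, 4, 4/3), (2, 16, 8, 8/5), (14/3, 14, 7, 14/5) respectively. -/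
/-- For each Type I flag manifold (of F₄, E₇, E₈(i), E₈(ii)), with the listed
isotropy dimensions and structure constants, the Kähler–Einstein metric
(x₁,x₂,x₃,x₄) = (1,2,3,4) satisfies r₁ = r₂, r₂ = r₃, r₃ = r₄ for the Ricci
components of Proposition 4.1. -/
theorem stmt_18 (d₁ d₂ d₃ d₄ c224 c112 c123 c134 : ℝ)
    (h : (d₁, d₂, d₃, d₄, c224, c112, c123, c134) = (12, 18, 4, 6, 2, 2, 1, 2/3) ∨
         (d₁, d₂, d₃, d₄, c224, c112, c123, c134) = (48, 36, 16, 6, 2, 8, 4, 4/3) ∨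
         (d₁, d₂, d₃, d₄, c224, c112, c123, c134) = (96, 60, 32, 6, 2, 16, 8, 8/5) ∨
         (d₁, d₂, d₃, d₄, c224, c112, c123, c134) = (84, 70, 28, 14, 14/3, 14, 7, 14/5)) :
    ∀ x₁ x₂ x₃ x₄ : ℝ, (x₁, x₂, x₃, x₄) = (1, 2, 3, 4) →
    let r₁ : ℝ := 1 / (2 * x₁) - (c112 / (2 * d₁)) * (x₂ / x₁ ^ 2)
      + (c123 / (2 * d₁)) * (x₁ / (x₂ * x₃) - x₂ / (x₁ * x₃) - x₃ / (x₁ * x₂))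
      + (c134 / (2 * d₁)) * (x₁ / (x₃ * x₄) - x₃ / (x₁ * x₄) - x₄ / (x₁ * x₃))
    let r₂ : ℝ := 1 / (2 * x₂) - (c224 / (2 * d₂)) * (x₄ / x₂ ^ 2)
      + (c112 / (4 * d₂)) * (x₂ / x₁ ^ 2 - 2 / x₂)
      + (c123 / (2 * d₂)) * (x₂ / (x₁ * x₃) - x₁ / (x₂ * x₃) - x₃ / (x₁ * x₂))
    let r₃ : ℝ := 1 / (2 * x₃)
      + (c123 / (2 * d₃)) * (x₃ / (x₁ * x₂) - x₂ / (x₁ * x₃) - x₁ / (x₂ * x₃))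
      + (c134 / (2 * d₃)) * (x₃ / (x₁ * x₄) - x₁ / (x₃ * x₄) - x₄ / (x₁ * x₃))
    let r₄ : ℝ := 1 / (2 * x₄) + (c224 / (4 * d₄)) * (x₄ / x₂ ^ 2 - 2 / x₄)
      + (c134 / (2 * d₄)) * (x₄ / (x₁ * x₃) - x₁ / (x₃ * x₄) - x₃ / (x₁ * x₄))
    r₁ = r₂ ∧ r₂ = r₃ ∧ r₃ = r₄ := by
  rintro x₁ x₂ x₃ x₄ hx
  obtain ⟨rfl, rfl, rfl, rfl⟩ := Prod.mk.injEq .. ▸ hx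
  rcases h with h | h | h | h <;>
    obtain ⟨rfl, rfl, rfl, rfl, rfl, rfl, rfl, rfl⟩ := Prod.mk.injEq .. ▸ h <;>
    refine ⟨by norm_num, by norm_num, by norm_num⟩
end

section
/- With (d₁,d₂,d₃,d₄) = (2, 2(2ℓ−3), 2(2ℓ−3), 2) and c₁₂³ = c₂₃⁴ = (2ℓ−3)/(2ℓ−1) for ℓ ≥ 3, the tuple (x₁,x₂,x₃,x₄) = (1, ℓ−3/2, ℓ−1/2, 2ℓ−2) satisfies r₁ = r₂ = r₃ = r₄, where r₁ = 1/(2x₁) + (c₁₂³/(2d₁))(x₁/(x₂x₃) − x₂/(x₁x₃) − x₃/(x₁x₂)), r₂ = 1/(2x₂) + (c₁₂³/(2d₂))(x₂/(x₁x₃) − x₁/(x₂x₃) − x₃/(x₁x₂)) + (c₂₃⁴/(2d₂))(x₂/(x₃x₄) − x₄/(x₂x₃) − x₃/(x₂x₄)), r₃ = 1/(2x₃) + (c₁₂³/(2d₃))(x₃/(x₁x₂) − x₂/(x₁x₃) − x₁/(x₂x₃)) + (c₂₃⁴/(2d₃))(x₃/(x₂x₄) − x₄/(x₂x₃) − x₂/(x₃x₄)),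 r₄ = 1/(2x₄) + (c₂₃⁴/(2d₄))(x₄/(x₂x₃) − x₃/(x₂x₄) − x₂/(x₃x₄)). -/
/-!
Write a = 2ℓ − 3 and b = 2ℓ − 1, so that (x₁, x₂, x₃, x₄) = (1, a/2, b/2, (a + b)/2),
c₁₂³ = c₂₃⁴ = a/b and b − a = 2. Each bracket xᵢ/(xⱼxₖ) − xⱼ/(xᵢxₖ) − xₖ/(xᵢxⱼ) equals
(xᵢ² − xⱼ² − xₖ²)/(xᵢxⱼxₖ), and the relation b − a = 2 makes every rᵢ collapse to the
same Einstein constant 1/b = 1/(2ℓ − 1); e.g. 4 − a² − b² = −2ab gives r₁ = 1/2 − a/(2b) = 1/b.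
-/

section EinsteinConstant

variable (L : ℝ)

theorem ricci₁_eq (ha : 2 * L - 3 ≠ 0) (hb : 2 * L - 1 ≠ 0) :
    1 / (2 * 1) + ((2 * L - 3) / (2 * L - 1) / (2 * 2)) *
      (1 / ((L - 3 / 2) * (L - 1 / 2)) - (L - 3 / 2) / (1 * (L - 1 / 2))
        - (L - 1 / 2) / (1 * (L - 3 / 2)))
      = 1 / (2 * L - 1) := by
  have hx₂ : L - 3 / 2 ≠ 0 := fun h => ha (by linarith)
  have hx₃ : L - 1 / 2 ≠ 0 := fun h => hb (by linarith)
  field_simp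
  ring

theorem ricci₂_eq (ha : 2 * L - 3 ≠ 0) (hb : 2 * L - 1 ≠ 0) (hc : L - 1 ≠ 0) :
    1 / (2 * (L - 3 / 2))
      + ((2 * L - 3) / (2 * L - 1) / (2 * (2 * (2 * L - 3)))) *
        ((L - 3 / 2) / (1 * (L - 1 / 2)) - 1 / ((L - 3 / 2) * (L - 1 / 2))
          - (L - 1 / 2) / (1 * (L - 3 / 2)))
      + ((2 * L - 3) / (2 * L - 1) / (2 * (2 * (2 * L - 3)))) *
        ((L - 3 / 2) / ((L - 1 / 2) * (2 * L - 2)) - (2 * L - 2) / ((L - 3 / 2) * (L - 1 / 2))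
          - (L - 1 / 2) / ((L - 3 / 2) * (2 * L - 2)))
      = 1 / (2 * L - 1) := by
  have hx₂ : L - 3 / 2 ≠ 0 := fun h => ha (by linarith)
  have hx₃ : L - 1 / 2 ≠ 0 := fun h => hb (by linarith)
  have hx₄ : 2 * L - 2 ≠ 0 := fun h => hc (by linarith)
  field_simp
  ring

theorem ricci₃_eq (ha : 2 * L - 3 ≠ 0) (hb : 2 * L - 1 ≠ 0) (hc : L - 1 ≠ 0) :
    1 / (2 * (L - 1 / 2))
      + ((2 * L - 3) / (2 * L - 1) / (2 * (2 * (2 * L - 3)))) *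
        ((L - 1 / 2) / (1 * (L - 3 / 2)) - (L - 3 / 2) / (1 * (L - 1 / 2))
          - 1 / ((L - 3 / 2) * (L - 1 / 2)))
      + ((2 * L - 3) / (2 * L - 1) / (2 * (2 * (2 * L - 3)))) *
        ((L - 1 / 2) / ((L - 3 / 2) * (2 * L - 2)) - (2 * L - 2) / ((L - 3 / 2) * (L - 1 / 2))
          - (L - 3 / 2) / ((L - 1 / 2) * (2 * L - 2)))
      = 1 / (2 * L - 1) := by
  have hx₂ : L - 3 / 2 ≠ 0 := fun h => ha (by linarith)
  have hx₃ : L - 1 / 2 ≠ 0 := fun h => hb (by linarith)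
  have hx₄ : 2 * L - 2 ≠ 0 := fun h => hc (by linarith)
  field_simp
  ring

theorem ricci₄_eq (ha : 2 * L - 3 ≠ 0) (hb : 2 * L - 1 ≠ 0) (hc : L - 1 ≠ 0) :
    1 / (2 * (2 * L - 2))
      + ((2 * L - 3) / (2 * L - 1) / (2 * 2)) *
        ((2 * L - 2) / ((L - 3 / 2) * (L - 1 / 2)) - (L - 1 / 2) / ((L - 3 / 2) * (2 * L - 2))
          - (L - 3 / 2) / ((L - 1 / 2) * (2 * L - 2)))
      = 1 / (2 * L - 1) := by
  have hx₂ : L - 3 / 2 ≠ 0 := fun h => ha (by linarith)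
  have hx₃ : L - 1 / 2 ≠ 0 := fun h => hb (by linarith)
  have hx₄ : 2 * L - 2 ≠ 0 := fun h => hc (by linarith)
  field_simp
  ring

end EinsteinConstant

/-- For SO(2ℓ+1)/U(1)×U(1)×SO(2ℓ−3), ℓ ≥ 3, with isotropy dimensions
(2, 2(2ℓ−3), 2(2ℓ−3), 2) and structure constants c₁₂³ = c₂₃⁴ = (2ℓ−3)/(2ℓ−1),
the Kähler–Einstein metric (1, ℓ−3/2, ℓ−1/2, 2ℓ−2) satisfies r₁ = r₂ = r₃ = r₄. -/
theorem stmt_19 (ℓ : ℤ) (hℓ : 3 ≤ ℓ) :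
    let L : ℝ := (ℓ : ℝ)
    let d₁ : ℝ := 2
    let d₂ : ℝ := 2 * (2 * L - 3)
    let d₃ : ℝ := 2 * (2 * L - 3)
    let d₄ : ℝ := 2
    let c123 : ℝ := (2 * L - 3) / (2 * L - 1)
    let c234 : ℝ := (2 * L - 3) / (2 * L - 1)
    let x₁ : ℝ := 1
    let x₂ : ℝ := L - 3 / 2
    let x₃ : ℝ := L - 1 / 2
    let x₄ : ℝ := 2 * L - 2
    let r₁ : ℝ := 1 / (2 * x₁)
      + (c123 / (2 * d₁)) * (x₁ / (x₂ * x₃) - x₂ / (x₁ * x₃) - x₃ / (x₁ * x₂))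
    let r₂ : ℝ := 1 / (2 * x₂)
      + (c123 / (2 * d₂)) * (x₂ / (x₁ * x₃) - x₁ / (x₂ * x₃) - x₃ / (x₁ * x₂))
      + (c234 / (2 * d₂)) * (x₂ / (x₃ * x₄) - x₄ / (x₂ * x₃) - x₃ / (x₂ * x₄))
    let r₃ : ℝ := 1 / (2 * x₃)
      + (c123 / (2 * d₃)) * (x₃ / (x₁ * x₂) - x₂ / (x₁ * x₃) - x₁ / (x₂ * x₃))
      + (c234 / (2 * d₃)) * (x₃ / (x₂ * x₄) - x₄ / (x₂ * x₃) - x₂ / (x₃ * x₄))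
    let r₄ : ℝ := 1 / (2 * x₄)
      + (c234 / (2 * d₄)) * (x₄ / (x₂ * x₃) - x₃ / (x₂ * x₄) - x₂ / (x₃ * x₄))
    r₁ = r₂ ∧ r₂ = r₃ ∧ r₃ = r₄ := by
  intro L d₁ d₂ d₃ d₄ c123 c234 x₁ x₂ x₃ x₄ r₁ r₂ r₃ r₄
  have hL : (3 : ℝ) ≤ L := Int.cast_le.mpr hℓ
  have ha : 2 * L - 3 ≠ 0 := by linarith
  have hb : 2 * L - 1 ≠ 0 := by linarith
  have hc : L - 1 ≠ 0 := by linarith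
  have e₁ : r₁ = 1 / (2 * L - 1) := ricci₁_eq L ha hb
  have e₂ : r₂ = 1 / (2 * L - 1) := ricci₂_eq L ha hb hc
  have e₃ : r₃ = 1 / (2 * L - 1) := ricci₃_eq L ha hb hc
  have e₄ : r₄ = 1 / (2 * L - 1) := ricci₄_eq L ha hb hc
  exact ⟨e₁.trans e₂.symm, e₂.trans e₃.symm, e₃.trans e₄.symm⟩
end
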